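/- arXiv:1803.01571 — 2 statements merged into one kernel-verified Lean document; each statement's English description precedes it below -/
import Mathlib

section
/- Let C_φ be a cutting for a knowledge base T and φ, and let ψ ∧ ψ' be a semantic conjunction. If φ ▷ ψ ∧ ψ' (with respect to C_φ) and T ∪ {ψ} ⊨ ψ', then φ ▷ ψ (with respect to C_φ). -/
variable {Sen M : Type*}

/-- The class of models of a set of sentences in a satisfaction system. -/
def ModS (sat : M → Sen → Prop) (T : Set Sen) : Set M := {m | ∀ φ ∈ T, sat m φ}

/-- The trivial models: those satisfying every sentence. -/
def TrivS (sat : M → Sen → Prop) : Set M := {m | ∀ φ : Sen, sat m φ}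

/-- A cutting for a knowledge base `T` and a sentence `φ`. -/
structure IsCutting (sat : M → Sen → Prop) (T : Set Sen) (φ : Sen) (C : Set (Set M)) : Prop where
  subset_mod : ∀ A ∈ C, A ⊆ ModS sat (T ∪ {φ})
  triv_lt : ∀ A ∈ C, TrivS sat ⊂ A
  union_closed : ∀ S ⊆ C, S.Nonempty → ⋃₀ S ∈ C
  top_mem : ModS sat (T ∪ {φ}) ∈ C
  wf : C.WellFoundedOn (fun A B => A ⊂ B)

/-- The set of ⊆-minimal elements of a family of sets. -/
def MinCut (C : Set (Set M)) : Set (Set M) := {A ∈ C | ∀ B ∈ C, ¬ B ⊂ A}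

/-- The explanatory relation based on a cutting `C` (for the observation whose cutting is `C`):
`ψ` is an explanation iff `Mod(T ∪ {ψ}) ≠ Triv` and `Mod(T ∪ {ψ})` is contained in some
minimal element of `C`. -/
def ExplRel (sat : M → Sen → Prop) (T : Set Sen) (C : Set (Set M)) (ψ : Sen) : Prop :=
  ModS sat (T ∪ {ψ}) ≠ TrivS sat ∧ ∃ A ∈ MinCut C, ModS sat (T ∪ {ψ}) ⊆ A

theorem ModS_union (sat : M → Sen → Prop) (A B : Set Sen) :
    ModS sat (A ∪ B) = ModS sat A ∩ ModS sat B := by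
  ext m
  simp only [ModS, Set.mem_ofPred_eq, Set.mem_inter_iff, Set.mem_union, or_imp, forall_and]

theorem ModS_union_conj_eq {sat : M → Sen → Prop} {T : Set Sen} {ψ ψ' χ : Sen}
    (hconj : ModS sat {χ} = ModS sat {ψ} ∩ ModS sat {ψ'})
    (hcons : ModS sat (T ∪ {ψ}) ⊆ ModS sat {ψ'}) :
    ModS sat (T ∪ {χ}) = ModS sat (T ∪ {ψ}) := by
  rw [ModS_union] at hcons ⊢
  rw [ModS_union, hconj, ← Set.inter_assoc]
  exact Set.inter_eq_left.mpr hcons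

theorem stmt_9_general (sat : M → Sen → Prop) (T : Set Sen)
    (ψ ψ' χ : Sen) (Cφ : Set (Set M))
    (hconj : ModS sat {χ} = ModS sat {ψ} ∩ ModS sat {ψ'})
    (h1 : ExplRel sat T Cφ χ)
    (h2 : ModS sat (T ∪ {ψ}) ⊆ ModS sat {ψ'}) :
    ExplRel sat T Cφ ψ := by
  rwa [ExplRel, ← ModS_union_conj_eq hconj h2]

theorem stmt_9 (sat : M → Sen → Prop) (T : Set Sen) (hT : T.Finite)
    (φ ψ ψ' χ : Sen) (Cφ : Set (Set M)) (hC : IsCutting sat T φ Cφ)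
    (hconj : ModS sat {χ} = ModS sat {ψ} ∩ ModS sat {ψ'})
    (h1 : ExplRel sat T Cφ χ)
    (h2 : ModS sat (T ∪ {ψ}) ⊆ ModS sat {ψ'}) :
    ExplRel sat T Cφ ψ :=
  stmt_9_general sat T ψ ψ' χ Cφ hconj h1 h2
end

section
/- Let C_{φ∨φ'} be a cutting for a knowledge base T and a semantic disjunction φ ∨ φ' that is totally ordered by inclusion. If φ ∨ φ' ▷ ψ (with respect to C_{φ∨φ'}) and T ∪ {ψ} ⊨ φ, then C_φ = {𝕄 ∩ Mod(φ) | 𝕄 ∈ C_{φ∨φ'}} is a cutting for T and φ and φ ▷ ψ (with respect to C_φ). -/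
variable {Sen M : Type*}

/-!
Intersecting with `Mod(φ)` preserves closure under nonempty unions, and well-foundedness
transfers to the traces because each trace `D` has a largest preimage, strictly monotone in `D`.
Since `C` is a chain, its minimal element `A₀` is its least element, so `A₀ ∩ Mod(φ)` is the least
element of the new cutting, and it still contains `Mod(T ∪ {ψ})` because `T ∪ {ψ} ⊨ φ`.
-/

open Set

section Trace

variable {α : Type*} {C : Set (Set α)} {A B D D₁ D₂ : Set α}

/-- For union-closed `C` and a trace `D` of `C` on `B`, the largest member of `C` with trace `D`. -/
def traceSup (C : Set (Set α)) (B D : Set α) : Set α := ⋃₀ {A ∈ C | A ∩ B = D}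

theorem subset_traceSup (hA : A ∈ C) (h : A ∩ B = D) : A ⊆ traceSup C B D :=
  subset_sUnion_of_mem ⟨hA, h⟩

theorem traceSup_mem (hU : ∀ S ⊆ C, S.Nonempty → ⋃₀ S ∈ C) (hD : D ∈ (· ∩ B) '' C) :
    traceSup C B D ∈ C :=
  hU _ (sep_subset _ _) hD

theorem traceSup_inter (hD : D ∈ (· ∩ B) '' C) : traceSup C B D ∩ B = D := by
  obtain ⟨A, hA, rfl⟩ := hD
  apply Subset.antisymm
  · rintro x ⟨⟨A', ⟨-, hA'⟩, hxA'⟩, hxB⟩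
    exact hA' ▸ ⟨hxA', hxB⟩
  · exact inter_subset_inter_left B (subset_traceSup hA rfl)

theorem traceSup_ssubset_traceSup (hU : ∀ S ⊆ C, S.Nonempty → ⋃₀ S ∈ C)
    (hD₁ : D₁ ∈ (· ∩ B) '' C) (hD₂ : D₂ ∈ (· ∩ B) '' C) (h : D₁ ⊂ D₂) :
    traceSup C B D₁ ⊂ traceSup C B D₂ := by
  have hunion : traceSup C B D₁ ∪ traceSup C B D₂ ∈ C := by
    rw [← sUnion_pair]
    exact hU _ (pair_subset (traceSup_mem hU hD₁) (traceSup_mem hU hD₂)) (insert_nonempty _ _)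
  have htrace : (traceSup C B D₁ ∪ traceSup C B D₂) ∩ B = D₂ := by
    rw [union_inter_distrib_right, traceSup_inter hD₁, traceSup_inter hD₂, union_eq_right.2 h.1]
  refine (subset_union_left.trans (subset_traceSup hunion htrace)).ssubset_of_ne fun heq => ?_
  exact h.ne (by rw [← traceSup_inter hD₁, heq, traceSup_inter hD₂])

theorem sUnion_mem_image_inter (hU : ∀ S ⊆ C, S.Nonempty → ⋃₀ S ∈ C) {S : Set (Set α)}
    (hS : S ⊆ (· ∩ B) '' C) (hne : S.Nonempty) : ⋃₀ S ∈ (· ∩ B) '' C := by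
  refine ⟨⋃₀ (traceSup C B '' S), hU _ ?_ (hne.image _), ?_⟩
  · rintro _ ⟨D, hD, rfl⟩
    exact traceSup_mem hU (hS hD)
  · change _ ∩ B = _
    rw [sUnion_image, iUnion₂_inter, sUnion_eq_biUnion]
    exact iUnion₂_congr fun D hD => traceSup_inter (hS hD)

theorem wellFoundedOn_image_inter (hU : ∀ S ⊆ C, S.Nonempty → ⋃₀ S ∈ C)
    (hwf : C.WellFoundedOn (· ⊂ ·)) : ((· ∩ B) '' C).WellFoundedOn (· ⊂ ·) := by
  have : (traceSup C B '' ((· ∩ B) '' C)).WellFoundedOn (· ⊂ ·) :=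
    hwf.subset (image_subset_iff.2 fun _ hD => traceSup_mem hU hD)
  exact (wellFoundedOn_image.1 this).mono' fun _ hD₁ _ hD₂ h =>
    traceSup_ssubset_traceSup hU hD₁ hD₂ h

theorem inter_mem_minCut_image (hA : A ∈ C) (hleast : ∀ A' ∈ C, A ⊆ A') :
    A ∩ B ∈ MinCut ((· ∩ B) '' C) := by
  refine ⟨⟨A, hA, rfl⟩, ?_⟩
  rintro _ ⟨A', hA', rfl⟩ h
  exact h.not_subset (inter_subset_inter_left B (hleast A' hA'))

theorem IsChain.subset_of_mem_minCut (hC : IsChain (· ⊆ ·) C) (hA : A ∈ MinCut C)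
    (hB : B ∈ C) : A ⊆ B := by
  by_contra hAB
  exact hA.2 B hB (((hC.total hA.1 hB).resolve_left hAB).ssubset_of_not_subset hAB)

end Trace

section Satisfaction

variable (sat : M → Sen → Prop) {T : Set Sen} {φ χ : Sen}

theorem trivS_subset_modS (T : Set Sen) : TrivS sat ⊆ ModS sat T := fun _ hm φ _ => hm φ

theorem modS_union (T T' : Set Sen) : ModS sat (T ∪ T') = ModS sat T ∩ ModS sat T' := by
  ext m
  simp [ModS, or_imp, forall_and]

theorem modS_union_inter_of_subset (h : ModS sat {φ} ⊆ ModS sat {χ}) :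
    ModS sat (T ∪ {χ}) ∩ ModS sat {φ} = ModS sat (T ∪ {φ}) := by
  rw [modS_union, modS_union, inter_assoc, inter_eq_right.2 h]

variable {sat}

theorem IsCutting.image_inter {C : Set (Set M)} (hC : IsCutting sat T χ C)
    (hφχ : ModS sat {φ} ⊆ ModS sat {χ}) (htriv : ∀ A ∈ C, TrivS sat ⊂ A ∩ ModS sat {φ}) :
    IsCutting sat T φ ((· ∩ ModS sat {φ}) '' C) where
  subset_mod := by
    rintro _ ⟨A, hA, rfl⟩
    rw [← modS_union_inter_of_subset sat hφχ]
    exact inter_subset_inter_left _ (hC.subset_mod A hA)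
  triv_lt := by
    rintro _ ⟨A, hA, rfl⟩
    exact htriv A hA
  union_closed _ := sUnion_mem_image_inter hC.union_closed
  top_mem := ⟨_, hC.top_mem, modS_union_inter_of_subset sat hφχ⟩
  wf := wellFoundedOn_image_inter hC.union_closed hC.wf

end Satisfaction

theorem stmt_12_general (sat : M → Sen → Prop) (T : Set Sen)
    (φ φ' χ ψ : Sen) (C : Set (Set M))
    (hdisj : ModS sat {χ} = ModS sat {φ} ∪ ModS sat {φ'})
    (hC : IsCutting sat T χ C) (hchain : IsChain (· ⊆ ·) C)
    (h1 : ExplRel sat T C ψ)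
    (h2 : ModS sat (T ∪ {ψ}) ⊆ ModS sat {φ}) :
    IsCutting sat T φ ((fun A => A ∩ ModS sat {φ}) '' C) ∧
      ExplRel sat T ((fun A => A ∩ ModS sat {φ}) '' C) ψ := by
  obtain ⟨hne, A₀, hA₀, hψA₀⟩ := h1
  have hleast : ∀ A ∈ C, A₀ ⊆ A := fun A hA => hchain.subset_of_mem_minCut hA₀ hA
  have hψ : ∀ A ∈ C, ModS sat (T ∪ {ψ}) ⊆ A ∩ ModS sat {φ} := fun A hA =>
    subset_inter (hψA₀.trans (hleast A hA)) h2
  have htriv : TrivS sat ⊂ ModS sat (T ∪ {ψ}) :=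
    (trivS_subset_modS sat _).ssubset_of_ne (Ne.symm hne)
  refine ⟨hC.image_inter (hdisj ▸ subset_union_left) fun A hA => htriv.trans_subset (hψ A hA),
    hne, A₀ ∩ ModS sat {φ}, inter_mem_minCut_image hA₀.1 hleast, hψ A₀ hA₀.1⟩

theorem stmt_12 (sat : M → Sen → Prop) (T : Set Sen) (hT : T.Finite)
    (φ φ' χ ψ : Sen) (C : Set (Set M))
    (hdisj : ModS sat {χ} = ModS sat {φ} ∪ ModS sat {φ'})
    (hC : IsCutting sat T χ C) (hchain : IsChain (· ⊆ ·) C)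
    (h1 : ExplRel sat T C ψ)
    (h2 : ModS sat (T ∪ {ψ}) ⊆ ModS sat {φ}) :
    IsCutting sat T φ ((fun A => A ∩ ModS sat {φ}) '' C) ∧
      ExplRel sat T ((fun A => A ∩ ModS sat {φ}) '' C) ψ :=
  stmt_12_general sat T φ φ' χ ψ C hdisj hC hchain h1 h2
end
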